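/- arXiv:2004.01825 — 5 statements merged into one kernel-verified Lean document; each statement's English description precedes it below -/
import Mathlib

section
/- Let N be a real n×m matrix and B a real m×n matrix with m ≤ n. Then the characteristic polynomial of the n×n product N·B equals X^{n-m} times the characteristic polynomial of the m×m product B·N: det(X·I_n − N B) = X^{n-m} · det(X·I_m − B N). -/
open Polynomial Matrix

lemma eval_charpoly' {k : ℕ} (M : Matrix (Fin k) (Fin k) ℝ) (x : ℝ) :
    (M.charpoly).eval x = (x • (1 : Matrix (Fin k) (Fin k) ℝ) - M).det := by
  rw [Matrix.charpoly, ← Polynomial.coe_evalRingHom, RingHom.map_det]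
  congr 1
  ext i j
  simp [charmatrix_apply, Matrix.one_apply, Matrix.smul_apply]
  split <;> rename_i h <;> simp [Matrix.diagonal_apply, h]

lemma det_NB_zero {n m : ℕ} (hmn : m < n)
    (N : Matrix (Fin n) (Fin m) ℝ) (B : Matrix (Fin m) (Fin n) ℝ) :
    (N * B).det = 0 := by
  rw [← Matrix.exists_mulVec_eq_zero_iff]
  have hinj : ¬ Function.Injective B.mulVecLin := by
    intro h
    have := LinearMap.finrank_le_finrank_of_injective h
    simp [Module.finrank_pi] at this
    omega
  rw [Function.not_injective_iff] at hinj
  obtain ⟨a, b, hab, hne⟩ := hinj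
  refine ⟨a - b, sub_ne_zero.2 hne, ?_⟩
  have hB : B.mulVec (a - b) = 0 := by
    have : B.mulVecLin (a - b) = 0 := by rw [map_sub, hab, sub_self]
    simpa using this
  rw [← Matrix.mulVec_mulVec, hB, Matrix.mulVec_zero]

/-- For N an n×m matrix and B an m×n matrix with m ≤ n,
det(X·I_n − N B) = X^(n−m) · det(X·I_m − B N), i.e. the characteristic polynomial of
N·B is X^(n−m) times that of B·N. -/
theorem charpoly_mul_rect_comm {n m : ℕ} (hmn : m ≤ n)
    (N : Matrix (Fin n) (Fin m) ℝ) (B : Matrix (Fin m) (Fin n) ℝ) :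
    (N * B).charpoly = Polynomial.X ^ (n - m) * (B * N).charpoly := by
  apply Polynomial.funext
  intro x
  rw [eval_mul, eval_pow, eval_X, eval_charpoly', eval_charpoly']
  rcases eq_or_ne x 0 with rfl | hx
  · rcases eq_or_lt_of_le hmn with rfl | hlt
    · simp only [Nat.sub_self, pow_zero, one_mul, zero_smul, zero_sub, det_neg]
      rw [Matrix.det_mul, Matrix.det_mul]; ring
    · rw [zero_pow (by omega), zero_mul, zero_smul, zero_sub, det_neg,
        det_NB_zero hlt, mul_zero]
  · -- x ≠ 0
    have key : (1 + (-(x⁻¹ • N)) * B).det = (1 + B * (-(x⁻¹ • N))).det :=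
      Matrix.det_one_add_mul_comm _ _
    have hL : x • (1 : Matrix (Fin n) (Fin n) ℝ) - N * B
        = x • (1 + (-(x⁻¹ • N)) * B) := by
      rw [smul_add]
      congr 1
      rw [Matrix.neg_mul, Matrix.smul_mul, smul_neg, smul_smul,
        mul_inv_cancel₀ hx, one_smul, sub_eq_add_neg]
    have hR : x • (1 : Matrix (Fin m) (Fin m) ℝ) - B * N
        = x • (1 + B * (-(x⁻¹ • N))) := by
      rw [smul_add]
      congr 1
      rw [Matrix.mul_neg, Matrix.mul_smul, smul_neg, smul_smul,
        mul_inv_cancel₀ hx, one_smul, sub_eq_add_neg]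
    rw [hL, hR, Matrix.det_smul, Matrix.det_smul, key, Fintype.card_fin, Fintype.card_fin,
      ← mul_assoc, ← pow_add, Nat.sub_add_cancel hmn]
end

section
/- Let f : ℝ^n → ℝ^{n-k} and N : ℝ^n → ℝ^{n×(n-k)} be continuously differentiable, h(z) = N(z) f(z), and let z₀ satisfy f(z₀) = 0. Then the characteristic polynomial of the n×n Jacobian Dh(z₀) equals X^k times the characteristic polynomial of the (n-k)×(n-k) matrix Df(z₀)·N(z₀). Consequently, the eigenvalues of Dh(z₀) consist of (at least) k zero eigenvalues together with the eigenvalues of Df(z₀)·N(z₀), so the nontrivial eigenvalues of the layer problem along the critical manifold are equal as a set to the eigenvalues of Df·N. -/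
/-!
Because `f z₀ = 0`, the term `(DN(z₀) ·) f(z₀)` of the product rule vanishes, so
`Dh(z₀) = N(z₀) · Df(z₀)`. For an `n × m` matrix `A` and an `m × n` matrix `B` with `m ≤ n`,
Sylvester's identity `χ_{AB} = X^(n-m) χ_{BA}` then gives the factorization with `m = n - k`,
and the nonzero roots of both sides agree.
-/

open Asymptotics Filter Topology Polynomial Matrix

theorem HasFDerivAt.smul_of_eq_zero_of_continuousAt
    {𝕜 E F : Type*} [NontriviallyNormedField 𝕜] [NormedAddCommGroup E] [NormedSpace 𝕜 E]
    [NormedAddCommGroup F] [NormedSpace 𝕜 F]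
    {g : E → 𝕜} {g' : E →L[𝕜] 𝕜} {c : E → F} {x : E}
    (hg : HasFDerivAt g g' x) (hgx : g x = 0) (hc : ContinuousAt c x) :
    HasFDerivAt (fun y => g y • c y) (g'.smulRight (c x)) x := by
  have hg_bigO : g =O[𝓝 x] fun y => ‖y - x‖ := by
    simpa [hgx] using hg.isBigO_sub.norm_right
  have hc_littleO : (fun y => c y - c x) =o[𝓝 x] fun _ => (1 : ℝ) :=
    (isLittleO_one_iff ℝ).2 (tendsto_sub_nhds_zero_iff.2 hc)
  have hrem : (fun y => g y • (c y - c x)) =o[𝓝 x] fun y => y - x := by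
    simpa using (hg_bigO.smul_isLittleO hc_littleO).norm_right
  refine .of_isLittleO (((hg.smul_const (c x)).isLittleO.add hrem).congr_left fun y => ?_)
  simp [hgx, smul_sub]

theorem HasFDerivAt.mulVec_of_eq_zero_of_continuousAt
    {𝕜 E m p : Type*} [NontriviallyNormedField 𝕜] [CompleteSpace 𝕜]
    [NormedAddCommGroup E] [NormedSpace 𝕜 E]
    [Fintype m] [Fintype p] [DecidableEq p]
    {N : E → Matrix m p 𝕜} {f : E → p → 𝕜} {f' : E →L[𝕜] p → 𝕜} {x : E}
    (hf : HasFDerivAt f f' x) (hfx : f x = 0) (hN : ContinuousAt N x) :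
    HasFDerivAt (fun y => N y *ᵥ f y) ((toLin' (N x)).toContinuousLinearMap.comp f') x := by
  have hcol : ∀ j, HasFDerivAt (fun y => f y j • fun i => N y i j)
      (((ContinuousLinearMap.proj j).comp f').smulRight fun i => N x i j) x := fun j =>
    (hasFDerivAt_pi'.1 hf j).smul_of_eq_zero_of_continuousAt (congrFun hfx j)
      (continuousAt_pi.2 fun i => continuousAt_pi.1 (continuousAt_pi.1 hN i) j)
  have hsum : (fun y => N y *ᵥ f y) = fun y => ∑ j, f y j • fun i => N y i j := by
    ext y i
    simp [mulVec, dotProduct, mul_comm]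
  have hderiv : (toLin' (N x)).toContinuousLinearMap.comp f'
      = ∑ j, ((ContinuousLinearMap.proj j).comp f').smulRight fun i => N x i j := by
    ext v i
    simp [mulVec, dotProduct, mul_comm]
  rw [hsum, hderiv]
  exact HasFDerivAt.fun_sum fun j _ => hcol j

/-- For the layer problem h(z) = N(z) f(z) with z₀ on the critical
manifold, the characteristic polynomial of the n×n Jacobian Dh(z₀) equals
X^k times the characteristic polynomial of the (n−k)×(n−k) matrix Df(z₀)·N(z₀).
Consequently the eigenvalues of Dh(z₀) consist of (at least) k zeros together with
the eigenvalues of Df(z₀)·N(z₀): every nonzero μ is a root of one characteristic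
polynomial iff it is a root of the other. -/
theorem charpoly_layer_jacobian {n k : ℕ} (hk : k ≤ n)
    (f : (Fin n → ℝ) → (Fin (n - k) → ℝ))
    (N : (Fin n → ℝ) → Matrix (Fin n) (Fin (n - k)) ℝ)
    (hf : ContDiff ℝ 1 f)
    (hN : ∀ i j, ContDiff ℝ 1 fun z => N z i j)
    (z₀ : Fin n → ℝ) (hz₀ : f z₀ = 0) :
    (LinearMap.toMatrix' (fderiv ℝ (fun z => (N z).mulVec (f z)) z₀).toLinearMap).charpoly
        = Polynomial.X ^ k
          * ((LinearMap.toMatrix' (fderiv ℝ f z₀).toLinearMap) * N z₀).charpoly ∧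
      ∀ μ : ℝ, μ ≠ 0 →
        ((LinearMap.toMatrix'
            (fderiv ℝ (fun z => (N z).mulVec (f z)) z₀).toLinearMap).charpoly.IsRoot μ ↔
          ((LinearMap.toMatrix' (fderiv ℝ f z₀).toLinearMap) * N z₀).charpoly.IsRoot μ) := by
  have hDf : HasFDerivAt f (fderiv ℝ f z₀) z₀ := (hf.differentiable one_ne_zero z₀).hasFDerivAt
  have hNz₀ : ContinuousAt N z₀ := (continuous_matrix fun i j => (hN i j).continuous).continuousAt
  have hjac : LinearMap.toMatrix' (fderiv ℝ (fun z => N z *ᵥ f z) z₀).toLinearMap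
      = N z₀ * LinearMap.toMatrix' (fderiv ℝ f z₀).toLinearMap := by
    rw [(hDf.mulVec_of_eq_zero_of_continuousAt hz₀ hNz₀).fderiv,
      ContinuousLinearMap.toLinearMap_comp, LinearMap.toMatrix'_comp,
      LinearMap.coe_toContinuousLinearMap, LinearMap.toMatrix'_toLin']
  have hchar : (LinearMap.toMatrix' (fderiv ℝ (fun z => N z *ᵥ f z) z₀).toLinearMap).charpoly
      = X ^ k * (LinearMap.toMatrix' (fderiv ℝ f z₀).toLinearMap * N z₀).charpoly := by
    rw [hjac, Matrix.charpoly_mul_comm_of_le _ _ (by simp)]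
    simp [Nat.sub_sub_self hk]
  refine ⟨hchar, fun μ hμ => ?_⟩
  simp [hchar, hμ]
end

section
/- Consider the layer problem of the three-component negative feedback oscillator: N(x,y,z) = (α₁(1/(1+z²) − x), α₂x − 1, α₃(y − z)) and f(x,y,z) = y, with parameters α₁, α₃ > 0 and α₂ > 1. Then (L_N f)(x,y,z) = α₂ x − 1 everywhere, so the contact set is F = {(x,y,z) : y = 0, x = 1/α₂}; and for every point (1/α₂, 0, z) ∈ F, (L_N² f)(1/α₂, 0, z) = α₁ (α₂ − (1 + z²))/(1 + z²). Consequently, every point of F is a nondegenerate (order-one) contact fold except the two points with z = √(α₂ − 1) and z = −√(α₂ − 1), where L_N² f vanishes. -/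
/-- The Lie derivative of a scalar function g along the vector field N:
(L_N g)(z) = Dg(z) N(z). Iterated Lie derivatives are given by `(lieD N)^[j] g`. -/
noncomputable def lieD {n : ℕ} (N : (Fin n → ℝ) → (Fin n → ℝ))
    (g : (Fin n → ℝ) → ℝ) : (Fin n → ℝ) → ℝ :=
  fun z => fderiv ℝ g z (N z)

section LieDerivative

variable {n : ℕ} (N : (Fin n → ℝ) → (Fin n → ℝ))

lemma lieD_const_mul_coord_sub (c d : ℝ) (i : Fin n) :
    lieD N (fun p => c * p i - d) = fun p => c * N p i := by
  funext p
  rw [lieD, (((hasFDerivAt_apply i p).const_mul c).sub_const d).fderiv]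
  rfl

lemma lieD_coord (i : Fin n) : lieD N (fun p => p i) = fun p => N p i := by
  simpa using lieD_const_mul_coord_sub N 1 0 i

end LieDerivative

lemma div_one_add_sq_eq_zero_iff {a b z : ℝ} (ha : a ≠ 0) (hb : 1 ≤ b) :
    a * (b - (1 + z ^ 2)) / (1 + z ^ 2) = 0 ↔ z = √(b - 1) ∨ z = -√(b - 1) := by
  have hpos : (0 : ℝ) < 1 + z ^ 2 := by positivity
  rw [div_eq_zero_iff, mul_eq_zero, ← sq_eq_sq_iff_eq_or_eq_neg, Real.sq_sqrt (by linarith)]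
  constructor
  · rintro ((h | h) | h)
    · exact absurd h ha
    · linarith
    · linarith
  · intro h
    exact Or.inl (Or.inr (by linarith))

theorem three_component_oscillator_folds_general (α₁ α₂ α₃ : ℝ)
    (h₁ : 0 < α₁) (h₂ : 1 < α₂)
    (N : (Fin 3 → ℝ) → (Fin 3 → ℝ))
    (hN : N = fun p => ![α₁ * (1 / (1 + (p 2) ^ 2) - p 0),
      α₂ * p 0 - 1, α₃ * (p 1 - p 2)])
    (f : (Fin 3 → ℝ) → ℝ) (hf : f = fun p => p 1) :
    (∀ p, lieD N f p = α₂ * p 0 - 1) ∧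
      ({p : Fin 3 → ℝ | f p = 0 ∧ lieD N f p = 0}
        = {p : Fin 3 → ℝ | p 1 = 0 ∧ p 0 = 1 / α₂}) ∧
      (∀ z : ℝ, (lieD N)^[2] f ![1 / α₂, 0, z] = α₁ * (α₂ - (1 + z ^ 2)) / (1 + z ^ 2)) ∧
      (∀ z : ℝ, z ≠ Real.sqrt (α₂ - 1) → z ≠ -Real.sqrt (α₂ - 1) →
        (lieD N)^[2] f ![1 / α₂, 0, z] ≠ 0) ∧
      (lieD N)^[2] f ![1 / α₂, 0, Real.sqrt (α₂ - 1)] = 0 ∧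
      (lieD N)^[2] f ![1 / α₂, 0, -Real.sqrt (α₂ - 1)] = 0 := by
  subst hf
  have hα₂ : α₂ ≠ 0 := by positivity
  have hL1 : lieD N (fun p => p 1) = fun p => α₂ * p 0 - 1 := by
    rw [lieD_coord, hN]; rfl
  have hL2 (z : ℝ) : (lieD N)^[2] (fun p => p 1) ![1 / α₂, 0, z]
      = α₁ * (α₂ - (1 + z ^ 2)) / (1 + z ^ 2) := by
    rw [Function.iterate_succ_apply', Function.iterate_one, hL1, lieD_const_mul_coord_sub]
    simp only [hN, Matrix.cons_val_zero, Matrix.cons_val_two, Matrix.tail_cons, Matrix.head_cons]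
    field_simp
  have hzero (z : ℝ) := div_one_add_sq_eq_zero_iff (z := z) h₁.ne' h₂.le
  refine ⟨congrFun hL1, ?_, hL2, fun z hp hm => ?_, ?_, ?_⟩
  · ext p
    simp only [Set.mem_ofPred_eq, hL1, sub_eq_zero, eq_div_iff hα₂, mul_comm]
  · rw [hL2, Ne, hzero]; tauto
  · rw [hL2, hzero]; exact Or.inl rfl
  · rw [hL2, hzero]; exact Or.inr rfl

/-- For the three-component negative feedback oscillator layer problem
(with α₁, α₃ > 0, α₂ > 1): L_N f = α₂x − 1, so the contact set is
F = {y = 0, x = 1/α₂}; on F, L_N² f (1/α₂, 0, z) = α₁(α₂ − (1+z²))/(1+z²), so every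
point of F is an order-one contact fold except the two points with z = ±√(α₂ − 1),
where L_N² f vanishes. -/
theorem three_component_oscillator_folds (α₁ α₂ α₃ : ℝ)
    (h₁ : 0 < α₁) (h₃ : 0 < α₃) (h₂ : 1 < α₂)
    (N : (Fin 3 → ℝ) → (Fin 3 → ℝ))
    (hN : N = fun p => ![α₁ * (1 / (1 + (p 2) ^ 2) - p 0),
      α₂ * p 0 - 1, α₃ * (p 1 - p 2)])
    (f : (Fin 3 → ℝ) → ℝ) (hf : f = fun p => p 1) :
    (∀ p, lieD N f p = α₂ * p 0 - 1) ∧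
      ({p : Fin 3 → ℝ | f p = 0 ∧ lieD N f p = 0}
        = {p : Fin 3 → ℝ | p 1 = 0 ∧ p 0 = 1 / α₂}) ∧
      (∀ z : ℝ, (lieD N)^[2] f ![1 / α₂, 0, z] = α₁ * (α₂ - (1 + z ^ 2)) / (1 + z ^ 2)) ∧
      (∀ z : ℝ, z ≠ Real.sqrt (α₂ - 1) → z ≠ -Real.sqrt (α₂ - 1) →
        (lieD N)^[2] f ![1 / α₂, 0, z] ≠ 0) ∧
      (lieD N)^[2] f ![1 / α₂, 0, Real.sqrt (α₂ - 1)] = 0 ∧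
      (lieD N)^[2] f ![1 / α₂, 0, -Real.sqrt (α₂ - 1)] = 0 :=
  three_component_oscillator_folds_general α₁ α₂ α₃ h₁ h₂ N hN f hf
end

section
/- Consider the layer problem of the three-component negative feedback oscillator: N(x,y,z) = (α₁(1/(1+z²) − x), α₂x − 1, α₃(y − z)) and f(x,y,z) = y, with parameters α₁, α₃ > 0 and α₂ > 1, and let K = (1/α₂, 0, √(α₂ − 1)). Then f(K) = 0, (L_N f)(K) = 0, (L_N² f)(K) = 0, and (L_N³ f)(K) = 2 α₁ α₃ (α₂ − 1)/α₂ ≠ 0, so K is a contact point of order two; moreover the 2×3 matrix with rows Df(K) = (0, 1, 0) and D(L_N f)(K) = (α₂, 0, 0) has rank 2. Hence K is a contact cusp. -/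
/-! At K we have y = 0 and x = 1/α₂ = 1/(1 + z²), so the first two components of N vanish and
N(K) = (0, 0, -α₃√(α₂ - 1)). The Lie derivatives are explicit: L_N f = α₂x - 1 and
L_N² f = α₁α₂(1/(1 + z²) - x), both zero at K. Hence L_N³ f(K) is the z-derivative
-2α₁α₂z/(1 + z²)² of L_N² f at K times -α₃z, i.e. 2α₁α₃(α₂ - 1)/α₂. The rank condition holds
because Df = e_y and D(L_N f) = α₂ e_x. -/

open ContinuousLinearMap

section LieDerivative

variable {n : ℕ} (N : (Fin n → ℝ) → (Fin n → ℝ))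

theorem lieD_eq_of_hasFDerivAt {g : (Fin n → ℝ) → ℝ} {g' : (Fin n → ℝ) →L[ℝ] ℝ}
    {z : Fin n → ℝ} (h : HasFDerivAt g g' z) : lieD N g z = g' (N z) := by
  rw [lieD, h.fderiv]

theorem hasFDerivAt_const_mul_apply_sub (c d : ℝ) (j : Fin n) (z : Fin n → ℝ) :
    HasFDerivAt (fun p : Fin n → ℝ => c * p j - d)
      (c • proj (R := ℝ) (φ := fun _ : Fin n => ℝ) j) z :=
  ((hasFDerivAt_apply j z).const_mul c).sub_const d

theorem lieD_const_mul_apply_sub (c d : ℝ) (j : Fin n) :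
    lieD N (fun p => c * p j - d) = fun p => c * N p j := by
  funext z
  rw [lieD_eq_of_hasFDerivAt N (hasFDerivAt_const_mul_apply_sub c d j z)]
  rfl

theorem fderiv_const_mul_apply_sub_single (c d : ℝ) (j : Fin n) (z : Fin n → ℝ) :
    (fun i => fderiv ℝ (fun p : Fin n → ℝ => c * p j - d) z (Pi.single i 1))
      = Pi.single j c := by
  ext i
  rw [(hasFDerivAt_const_mul_apply_sub c d j z).fderiv]
  by_cases hij : i = j
  · subst hij; simp
  · simp [hij, Ne.symm hij]

theorem hasDerivAt_one_div_one_add_sq (t : ℝ) :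
    HasDerivAt (fun t : ℝ => 1 / (1 + t ^ 2)) (-2 * t / (1 + t ^ 2) ^ 2) t := by
  have hpos : 1 + t ^ 2 ≠ 0 := by positivity
  simp only [one_div]
  exact ((hasDerivAt_inv hpos).comp t ((hasDerivAt_pow 2 t).const_add 1)).congr_deriv
    (by ring)

theorem lieD_const_mul_one_div_one_add_sq_sub (a c : ℝ) (i j : Fin n) (z : Fin n → ℝ) :
    lieD N (fun p => c * (a * (1 / (1 + p i ^ 2) - p j))) z
      = c * a * (-2 * z i / (1 + z i ^ 2) ^ 2 * N z i - N z j) := by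
  have hhill := (hasDerivAt_one_div_one_add_sq (z i)).comp_hasFDerivAt z
    (hasFDerivAt_apply (𝕜 := ℝ) i z)
  rw [lieD_eq_of_hasFDerivAt N (g := fun p => c * (a * (1 / (1 + p i ^ 2) - p j)))
    (((hhill.sub (hasFDerivAt_apply j z)).const_mul a).const_mul c)]
  simp only [smul_apply, sub_apply, proj_apply, smul_eq_mul]
  ring

end LieDerivative

section Oscillator

variable (α₁ α₂ α₃ : ℝ)

noncomputable def oscillatorField (p : Fin 3 → ℝ) : Fin 3 → ℝ :=
  ![α₁ * (1 / (1 + (p 2) ^ 2) - p 0), α₂ * p 0 - 1, α₃ * (p 1 - p 2)]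

noncomputable def oscillatorCuspPoint : Fin 3 → ℝ := ![1 / α₂, 0, Real.sqrt (α₂ - 1)]

theorem lieD_oscillatorField_apply_one :
    lieD (oscillatorField α₁ α₂ α₃) (fun p => p 1) = fun p => α₂ * p 0 - 1 := by
  simpa [oscillatorField] using lieD_const_mul_apply_sub (oscillatorField α₁ α₂ α₃) 1 0 1

theorem lieD_oscillatorField_const_mul_apply_zero_sub_one :
    lieD (oscillatorField α₁ α₂ α₃) (fun p => α₂ * p 0 - 1)
      = fun p => α₂ * (α₁ * (1 / (1 + p 2 ^ 2) - p 0)) :=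
  lieD_const_mul_apply_sub _ α₂ 1 0

variable {α₂}

theorem one_add_sq_oscillatorCuspPoint_two (h : 1 ≤ α₂) :
    1 + oscillatorCuspPoint α₂ 2 ^ 2 = α₂ := by
  simp [oscillatorCuspPoint, Real.sq_sqrt (sub_nonneg.2 h)]

theorem oscillatorField_oscillatorCuspPoint (h : 1 ≤ α₂) :
    oscillatorField α₁ α₂ α₃ (oscillatorCuspPoint α₂)
      = ![0, 0, -(α₃ * Real.sqrt (α₂ - 1))] := by
  have hα₂ : α₂ ≠ 0 := by positivity
  ext i
  fin_cases i
  · simp [oscillatorField, oscillatorCuspPoint, Real.sq_sqrt (sub_nonneg.2 h)]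
  · simp [oscillatorField, oscillatorCuspPoint, hα₂]
  · simp [oscillatorField, oscillatorCuspPoint]

theorem lieD_oscillatorField_apply_one_oscillatorCuspPoint (hα₂ : α₂ ≠ 0) :
    lieD (oscillatorField α₁ α₂ α₃) (fun p => p 1) (oscillatorCuspPoint α₂) = 0 := by
  simp [lieD_oscillatorField_apply_one, oscillatorCuspPoint, hα₂]

theorem iterate_two_lieD_oscillatorField_apply_one_oscillatorCuspPoint (h : 1 ≤ α₂) :
    (lieD (oscillatorField α₁ α₂ α₃))^[2] (fun p => p 1) (oscillatorCuspPoint α₂) = 0 := by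
  rw [Function.iterate_succ_apply', Function.iterate_one, lieD_oscillatorField_apply_one,
    lieD_oscillatorField_const_mul_apply_zero_sub_one]
  dsimp only
  rw [one_add_sq_oscillatorCuspPoint_two h]
  simp [oscillatorCuspPoint]

theorem iterate_three_lieD_oscillatorField_apply_one_oscillatorCuspPoint (h : 1 ≤ α₂) :
    (lieD (oscillatorField α₁ α₂ α₃))^[3] (fun p => p 1) (oscillatorCuspPoint α₂)
      = 2 * α₁ * α₃ * (α₂ - 1) / α₂ := by
  have hα₂ : α₂ ≠ 0 := by positivity
  rw [Function.iterate_succ_apply', Function.iterate_succ_apply', Function.iterate_one,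
    lieD_oscillatorField_apply_one, lieD_oscillatorField_const_mul_apply_zero_sub_one,
    lieD_const_mul_one_div_one_add_sq_sub, oscillatorField_oscillatorCuspPoint _ _ h,
    one_add_sq_oscillatorCuspPoint_two h]
  simp only [oscillatorCuspPoint, Matrix.cons_val, Matrix.cons_val_zero, sub_zero]
  field_simp
  rw [Real.sq_sqrt (sub_nonneg.2 h)]

theorem fderiv_apply_one_single (z : Fin 3 → ℝ) :
    (fun i => fderiv ℝ (fun p : Fin 3 → ℝ => p 1) z (Pi.single i 1)) = ![0, 1, 0] := by
  have h := fderiv_const_mul_apply_sub_single 1 0 (1 : Fin 3) z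
  simp only [one_mul, sub_zero] at h
  rw [h]
  ext i; fin_cases i <;> rfl

theorem fderiv_lieD_oscillatorField_apply_one_single (z : Fin 3 → ℝ) :
    (fun i => fderiv ℝ (lieD (oscillatorField α₁ α₂ α₃) fun p => p 1) z (Pi.single i 1))
      = ![α₂, 0, 0] := by
  rw [lieD_oscillatorField_apply_one, fderiv_const_mul_apply_sub_single]
  ext i; fin_cases i <;> rfl

end Oscillator

theorem rank_of_zero_one_zero_of_ne_zero {K : Type*} [Field K] {c : K} (hc : c ≠ 0) :
    (Matrix.of ![![(0 : K), 1, 0], ![c, 0, 0]]).rank = 2 := by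
  have hrows : LinearIndependent K ![![(0 : K), 1, 0], ![c, 0, 0]] := by
    refine LinearIndependent.pair_iff.2 fun s t hst => ?_
    have h0 := congr_fun hst 0
    have h1 := congr_fun hst 1
    simp only [Matrix.smul_cons, smul_eq_mul, mul_zero, mul_one, Matrix.smul_empty, Pi.add_apply,
      Matrix.cons_val_zero, Matrix.cons_val_one, zero_add, add_zero, Pi.zero_apply,
      mul_eq_zero] at h0 h1
    exact ⟨h1, h0.resolve_right hc⟩
  exact hrows.rank_matrix

/-- For the three-component negative feedback oscillator (α₁, α₃ > 0,
α₂ > 1) and K = (1/α₂, 0, √(α₂ − 1)): f(K) = L_N f(K) = L_N² f(K) = 0 and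
L_N³ f(K) = 2α₁α₃(α₂ − 1)/α₂ ≠ 0, so K is a contact point of order two; moreover the
2×3 matrix with rows Df(K) = (0,1,0) and D(L_N f)(K) = (α₂,0,0) has rank 2.
Hence K is a contact cusp. -/
theorem three_component_oscillator_cusp (α₁ α₂ α₃ : ℝ)
    (h₁ : 0 < α₁) (h₃ : 0 < α₃) (h₂ : 1 < α₂)
    (N : (Fin 3 → ℝ) → (Fin 3 → ℝ))
    (hN : N = fun p => ![α₁ * (1 / (1 + (p 2) ^ 2) - p 0),
      α₂ * p 0 - 1, α₃ * (p 1 - p 2)])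
    (f : (Fin 3 → ℝ) → ℝ) (hf : f = fun p => p 1)
    (K : Fin 3 → ℝ) (hK : K = ![1 / α₂, 0, Real.sqrt (α₂ - 1)]) :
    f K = 0 ∧ lieD N f K = 0 ∧ (lieD N)^[2] f K = 0 ∧
      ((lieD N)^[3] f K = 2 * α₁ * α₃ * (α₂ - 1) / α₂ ∧ (lieD N)^[3] f K ≠ 0) ∧
      (fun i => fderiv ℝ f K (Pi.single i 1)) = ![0, 1, 0] ∧
      (fun i => fderiv ℝ (lieD N f) K (Pi.single i 1)) = ![α₂, 0, 0] ∧
      (Matrix.of ![fun i => fderiv ℝ f K (Pi.single i 1),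
        fun i => fderiv ℝ (lieD N f) K (Pi.single i 1)]).rank = 2 := by
  obtain rfl : N = oscillatorField α₁ α₂ α₃ := hN
  obtain rfl : K = oscillatorCuspPoint α₂ := hK
  subst hf
  have hα₂ : α₂ ≠ 0 := by positivity
  have hL3 := iterate_three_lieD_oscillatorField_apply_one_oscillatorCuspPoint α₁ α₃ h₂.le
  refine ⟨rfl, lieD_oscillatorField_apply_one_oscillatorCuspPoint α₁ α₃ hα₂,
    iterate_two_lieD_oscillatorField_apply_one_oscillatorCuspPoint α₁ α₃ h₂.le, ⟨hL3, ?_⟩,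
    fderiv_apply_one_single _, fderiv_lieD_oscillatorField_apply_one_single α₁ α₃ _, ?_⟩
  · have := sub_pos.2 h₂
    rw [hL3]
    positivity
  · rw [fderiv_apply_one_single, fderiv_lieD_oscillatorField_apply_one_single]
    exact rank_of_zero_one_zero_of_ne_zero hα₂
end

section
/- Consider the layer problem of Goldbeter's mitotic oscillator: f(X,M,C) = X M (1−X)(1−M) and N(X,M,C) = (M − 7/10, 6C/(1+2C) − 3/2, (1−X−C)/4), defined for C ≠ −1/2. Then: (a) for every (0, M, C) on the face S = {X = 0} of the critical manifold, (L_N f)(0, M, C) = M(1−M)(M − 7/10), so on {0 < M < 1} the contact set within this face is the fold line F = {X = 0, M = 7/10}; and (b) for every point (0, 7/10, C) ∈ F, (L_N² f)(0, 7/10, C) = (63/200)(2C − 1)/(2C + 1), which vanishes only at C = 1/2. Hence every point of F with C ≠ 1/2 (and C ≠ −1/2) is a nondegenerate (order-one) contact fold. -/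
theorem HasFDerivAt.lieD_eq {n : ℕ} {N : (Fin n → ℝ) → (Fin n → ℝ)} {g : (Fin n → ℝ) → ℝ}
    {g' : (Fin n → ℝ) →L[ℝ] ℝ} {z : Fin n → ℝ} (h : HasFDerivAt g g' z) :
    lieD N g z = g' (N z) := by
  rw [lieD, h.fderiv]

theorem mul_one_sub_mul_sub_eq_zero_iff {M a : ℝ} (hM₀ : 0 < M) (hM₁ : M < 1) :
    M * (1 - M) * (M - a) = 0 ↔ M = a := by
  simp [hM₀.ne', (sub_pos.2 hM₁).ne', sub_eq_zero]

theorem mul_two_mul_sub_one_div_eq_zero_iff {a C : ℝ} (ha : a ≠ 0) (hC : C ≠ -1 / 2) :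
    a * (2 * C - 1) / (2 * C + 1) = 0 ↔ C = 1 / 2 := by
  have hC' : 2 * C + 1 ≠ 0 := fun h => hC (by linarith)
  rw [div_eq_zero_iff, or_iff_left hC', mul_eq_zero, or_iff_right ha]
  constructor <;> intro h <;> linarith

def mitoticF (p : Fin 3 → ℝ) : ℝ := p 0 * p 1 * (1 - p 0) * (1 - p 1)

noncomputable def mitoticN (p : Fin 3 → ℝ) : Fin 3 → ℝ :=
  ![p 1 - 7 / 10, 6 * p 2 / (1 + 2 * p 2) - 3 / 2, (1 - p 0 - p 2) / 4]

theorem lieD_mitoticN_mitoticF :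
    lieD mitoticN mitoticF = fun z =>
      z 1 * (1 - z 1) * (1 - 2 * z 0) * (z 1 - 7 / 10) +
        z 0 * (1 - z 0) * (1 - 2 * z 1) * (6 * z 2 / (1 + 2 * z 2) - 3 / 2) := by
  funext z
  have hX := hasFDerivAt_apply (𝕜 := ℝ) 0 z
  have hM := hasFDerivAt_apply (𝕜 := ℝ) 1 z
  have hF : HasFDerivAt mitoticF (_ : (Fin 3 → ℝ) →L[ℝ] ℝ) z :=
    ((hX.mul hM).mul (hX.const_sub 1)).mul (hM.const_sub 1)
  rw [hF.lieD_eq]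
  simp only [mitoticN, Pi.mul_apply, smul_neg, smul_add, add_apply,
    neg_apply, smul_apply, ContinuousLinearMap.proj_apply,
    Matrix.cons_val_one, Matrix.cons_val_zero, smul_eq_mul]
  ring

theorem lieD_mitoticN_mitoticF_face (M C : ℝ) :
    lieD mitoticN mitoticF ![0, M, C] = M * (1 - M) * (M - 7 / 10) := by
  rw [lieD_mitoticN_mitoticF]
  simp

theorem iterate_two_lieD_mitoticN_mitoticF_foldLine {C : ℝ} (hC : C ≠ -1 / 2) :
    (lieD mitoticN)^[2] mitoticF ![0, 7 / 10, C] = 63 / 200 * (2 * C - 1) / (2 * C + 1) := by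
  have hC' : 2 * C + 1 ≠ 0 := fun h => hC (by linarith)
  set z : Fin 3 → ℝ := ![0, 7 / 10, C]
  have hX := hasFDerivAt_apply (𝕜 := ℝ) 0 z
  have hM := hasFDerivAt_apply (𝕜 := ℝ) 1 z
  have hN : DifferentiableAt ℝ (fun p : Fin 3 → ℝ => 6 * p 2 / (1 + 2 * p 2) - 3 / 2) z := by
    fun_prop (disch := simpa [z, add_comm] using hC')
  have hL := (((hM.fun_mul (hM.const_sub 1)).fun_mul ((hX.const_mul 2).const_sub 1)).fun_mul
      (hM.sub_const (7 / 10))).fun_add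
    (((hX.fun_mul (hX.const_sub 1)).fun_mul ((hM.const_mul 2).const_sub 1)).fun_mul
      hN.hasFDerivAt)
  rw [Function.iterate_succ_apply, Function.iterate_one, lieD_mitoticN_mitoticF, hL.lieD_eq]
  simp only [z, mitoticN, Matrix.cons_val_one, Matrix.cons_val_zero, Matrix.cons_val, mul_zero,
    sub_zero, mul_one, sub_self, zero_mul, smul_neg, smul_add, one_smul, zero_smul, neg_zero,
    add_zero, zero_add, add_apply, smul_apply,
    ContinuousLinearMap.proj_apply, smul_eq_mul]
  rw [add_comm 1 (2 * C), div_sub' hC', mul_div_assoc]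
  ring

/-- For Goldbeter's mitotic oscillator layer problem (defined for
C ≠ −1/2): (a) on the face {X = 0}, L_N f(0,M,C) = M(1−M)(M − 7/10), so for
0 < M < 1 the contact set within this face is the fold line {X = 0, M = 7/10};
(b) on this line L_N² f(0, 7/10, C) = (63/200)(2C−1)/(2C+1), which vanishes only at
C = 1/2; hence every point of the fold line with C ≠ 1/2 is an order-one contact
fold. -/
theorem mitotic_oscillator_folds
    (f : (Fin 3 → ℝ) → ℝ)
    (hf : f = fun p => p 0 * p 1 * (1 - p 0) * (1 - p 1))
    (N : (Fin 3 → ℝ) → (Fin 3 → ℝ))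
    (hN : N = fun p => ![p 1 - 7 / 10,
      6 * p 2 / (1 + 2 * p 2) - 3 / 2, (1 - p 0 - p 2) / 4]) :
    (∀ M C : ℝ, C ≠ -1 / 2 →
        lieD N f ![0, M, C] = M * (1 - M) * (M - 7 / 10)) ∧
      (∀ M C : ℝ, C ≠ -1 / 2 → 0 < M → M < 1 →
        ((f ![0, M, C] = 0 ∧ lieD N f ![0, M, C] = 0) ↔ M = 7 / 10)) ∧
      (∀ C : ℝ, C ≠ -1 / 2 →
        (lieD N)^[2] f ![0, 7 / 10, C] = 63 / 200 * (2 * C - 1) / (2 * C + 1)) ∧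
      (∀ C : ℝ, C ≠ -1 / 2 →
        ((lieD N)^[2] f ![0, 7 / 10, C] = 0 ↔ C = 1 / 2)) ∧
      (∀ C : ℝ, C ≠ -1 / 2 → C ≠ 1 / 2 →
        (lieD N)^[2] f ![0, 7 / 10, C] ≠ 0) := by
  obtain rfl : f = mitoticF := hf
  obtain rfl : N = mitoticN := hN
  have hfold_zero_iff (C : ℝ) (hC : C ≠ -1 / 2) :
      (lieD mitoticN)^[2] mitoticF ![0, 7 / 10, C] = 0 ↔ C = 1 / 2 := by
    rw [iterate_two_lieD_mitoticN_mitoticF_foldLine hC]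
    exact mul_two_mul_sub_one_div_eq_zero_iff (by norm_num) hC
  refine ⟨fun M C _ => lieD_mitoticN_mitoticF_face M C, fun M C _ hM₀ hM₁ => ?_,
    fun C hC => iterate_two_lieD_mitoticN_mitoticF_foldLine hC, hfold_zero_iff,
    fun C hC hC₁ => (hfold_zero_iff C hC).not.mpr hC₁⟩
  simpa [lieD_mitoticN_mitoticF_face, mitoticF] using mul_one_sub_mul_sub_eq_zero_iff hM₀ hM₁
end
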